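/- Cutting lemma (Lemma 3.2): Let d ≥ 2, 0 ≤ p < p_c(d), x, y ∈ ℤ^d, A ⊆ ℤ^d, and let b = (b̲, b̄) be a directed nearest-neighbor bond. Let ω₀ and ω₁ be two independent bond configurations, each distributed according to ℙ_p. Then ℙ_p(E(x, b, y; A)) = p · 𝔼₀[ 1{E'(x, b̲; A) occurs in ω₀} · 1{b̄ ∉ C̃^b(x) evaluated in ω₀} · ℙ₁( b̄ ↔ y off C̃^b(x) evaluated in ω₀ ) ], where the inner probability ℙ₁ refers to the configuration ω₁ with the set C̃^b(x) from ω₀ treated as a fixed (deterministic) vertex set, and the outer expectation 𝔼₀ is over ω₀. -/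

import Mathlib

open MeasureTheory Filter
open scoped ENNReal

namespace NoBLE

/-- Vertices of the hypercubic lattice `ℤ^d`. -/
abbrev Vertex (d : ℕ) := Fin d → ℤ

/-- The Euclidean norm `‖x‖₂` of a lattice point. -/
noncomputable def norm2 {d : ℕ} (x : Vertex d) : ℝ :=
  Real.sqrt (∑ i, ((x i : ℝ)) ^ 2)

/-- The `ℓ¹`-norm `‖x‖₁` of a lattice point. -/
def norm1 {d : ℕ} (x : Vertex d) : ℤ := ∑ i, |x i|

/-- The standard unit vector `e_i`. -/
def basis {d : ℕ} (i : Fin d) : Vertex d := fun j => if j = i then 1 else 0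

/-- Directions `ι ∈ {±1, …, ±d}`: `(i, true)` stands for `+e_i`, `(i, false)` for `−e_i`. -/
abbrev Dir (d : ℕ) := Fin d × Bool

/-- The unit vector `e_ι` attached to the direction `ι`. -/
def dirVec {d : ℕ} (ι : Dir d) : Vertex d := if ι.2 then basis ι.1 else -basis ι.1

/-- The opposite direction `−ι`. -/
def dirNeg {d : ℕ} (ι : Dir d) : Dir d := (ι.1, !ι.2)

/-- Nearest-neighbour bonds of `ℤ^d`: the pair `(x, i)` encodes the undirected bond
`{x, x + e_i}`; every nearest-neighbour bond has a unique such representation. -/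
abbrev Bond (d : ℕ) := Vertex d × Fin d

/-- Bond configurations: each bond is either occupied (`true`) or vacant (`false`). -/
abbrev Config (d : ℕ) := Bond d → Bool

noncomputable instance (d : ℕ) : Encodable (Bond d) := Encodable.ofCountable _

/-- The undirected nearest-neighbour bond `{x, y}` is occupied in the configuration `ω`. -/
def Occ {d : ℕ} (ω : Config d) (x y : Vertex d) : Prop :=
  (∃ i, y = x + basis i ∧ ω (x, i) = true) ∨ (∃ i, x = y + basis i ∧ ω (y, i) = true)

/-- `x ↔ y`: `x` and `y` are joined by a path of occupied bonds (in particular `x ↔ x`). -/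
def Conn {d : ℕ} (ω : Config d) (x y : Vertex d) : Prop :=
  Relation.ReflTransGen (Occ ω) x y

/-- Splitting a uniform-`[0,1)` random variable into an i.i.d. sequence of Bernoulli(`p`)
bits: `bit p n u` is the `n`-th bit. -/
noncomputable def bit (p : ℝ) : ℕ → ℝ → Bool
  | 0 => fun u => if u < p then true else false
  | n + 1 => fun u => bit p n (if u < p then u / p else (u - p) / (1 - p))

/-- The Bernoulli(`p`) bond-percolation measure `ℙ_p` on `Config d`, i.e. the product over
all bonds of Bernoulli(`p`) measures on `{occupied, vacant}`; it is realised as the joint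
law of the i.i.d. Bernoulli(`p`) family `(bit p (encode b))_{b : Bond d}` driven by a
uniform random variable on `[0,1)`. -/
noncomputable def percMeasure (d : ℕ) (p : ℝ) : Measure (Config d) :=
  Measure.map (fun u => fun b : Bond d => bit p (Encodable.encode b) u)
    (volume.restrict (Set.Ico (0 : ℝ) 1))

/-- The two-point function `τ_p(x) = ℙ_p(0 ↔ x)`, as an extended real number. -/
noncomputable def tauE (d : ℕ) (p : ℝ) (x : Vertex d) : ℝ≥0∞ :=
  percMeasure d p {ω | Conn ω 0 x}

/-- The two-point function `τ_p(x) = ℙ_p(0 ↔ x)`, as a real number. -/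
noncomputable def tau (d : ℕ) (p : ℝ) (x : Vertex d) : ℝ := (tauE d p x).toReal

/-- The susceptibility `χ(p) = Σ_{x ∈ ℤ^d} τ_p(x) ∈ [0, ∞]`. -/
noncomputable def chi (d : ℕ) (p : ℝ) : ℝ≥0∞ := ∑' x : Vertex d, tauE d p x

/-- The critical point `p_c(d) = sup { p ∈ [0,1] : χ(p) < ∞ }`. -/
noncomputable def pc (d : ℕ) : ℝ := sSup {p : ℝ | p ∈ Set.Icc (0 : ℝ) 1 ∧ chi d p < ⊤}


/-- The (ordered) pairs `(a,b)` and `(u,v)` span the same undirected edge. -/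
def SameEdge {d : ℕ} (a b u v : Vertex d) : Prop := (a = u ∧ b = v) ∨ (a = v ∧ b = u)

/-- `γ` is an `n`-step walk of occupied bonds from `x` to `y`. -/
def OccWalk {d n : ℕ} (ω : Config d) (γ : Fin (n + 1) → Vertex d) (x y : Vertex d) : Prop :=
  γ 0 = x ∧ γ (Fin.last n) = y ∧ ∀ i : Fin n, Occ ω (γ i.castSucc) (γ i.succ)

/-- The bonds used by the walk `γ` are pairwise distinct. -/
def DistinctBonds {d n : ℕ} (γ : Fin (n + 1) → Vertex d) : Prop :=
  ∀ i j : Fin n, i ≠ j → ¬ SameEdge (γ i.castSucc) (γ i.succ) (γ j.castSucc) (γ j.succ)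

/-- Occupation of the edge `{a,c}` avoiding the undirected edge `{u,v}`. -/
def OccAvoid {d : ℕ} (ω : Config d) (u v a c : Vertex d) : Prop :=
  Occ ω a c ∧ ¬ SameEdge a c u v

/-- `C̃^{{u,v}}(x)`: the set of vertices connected to `x` in the configuration in which
the bond `{u,v}` is made vacant. -/
def tildeC {d : ℕ} (ω : Config d) (u v x : Vertex d) : Set (Vertex d) :=
  {y | Relation.ReflTransGen (OccAvoid ω u v) x y}

/-- Occupation of the edge `{a,c}` off the vertex set `A` (no endpoint lies in `A`). -/
def OccOff {d : ℕ} (ω : Config d) (A : Set (Vertex d)) (a c : Vertex d) : Prop :=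
  Occ ω a c ∧ a ∉ A ∧ c ∉ A

/-- `x ↔ y off A`: connected by a path of occupied bonds having no endpoint in `A`. -/
def ConnOff {d : ℕ} (ω : Config d) (A : Set (Vertex d)) (x y : Vertex d) : Prop :=
  Relation.ReflTransGen (OccOff ω A) x y

/-- `x ↔_A y`: `x` and `y` are connected and every occupied path from `x` to `y` uses a
bond with an endpoint in `A` (by convention, `x ↔_A x` iff `x ∈ A`). -/
def ConnThrough {d : ℕ} (ω : Config d) (A : Set (Vertex d)) (x y : Vertex d) : Prop :=
  (x = y ∧ x ∈ A) ∨ (x ≠ y ∧ Conn ω x y ∧ ¬ ConnOff ω A x y)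

/-- The directed bond `(u,v)` is pivotal for `x ↔ y`. -/
def Pivotal {d : ℕ} (ω : Config d) (u v x y : Vertex d) : Prop :=
  Conn ω x u ∧ Conn ω v y ∧ y ∉ tildeC ω u v x

/-- The event `E'(v, y; A)`: `v ↔_A y` and there is no occupied directed bond pivotal for
`v ↔ y` whose bottom is reached from `v` through `A`. -/
def Eprime {d : ℕ} (ω : Config d) (v y : Vertex d) (A : Set (Vertex d)) : Prop :=
  ConnThrough ω A v y ∧
    ¬ ∃ a b : Vertex d, Occ ω a b ∧ Pivotal ω a b v y ∧ ConnThrough ω A v a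

/-- The event `E(x, b, y; A)` for the directed bond `b = (u, v)`. -/
def Eev {d : ℕ} (ω : Config d) (x u v y : Vertex d) (A : Set (Vertex d)) : Prop :=
  Eprime ω x u A ∧ Occ ω u v ∧ Pivotal ω u v x y

/-!
For `b = (u, v)`, on `E'(x, u; A)` the vertex `u` lies in `C̃^b(x)` (otherwise `b` would be an
occupied pivotal bond for `x ↔ u`), and then `b` is pivotal for `x ↔ y` exactly when
`v ∉ C̃^b(x)` and `v ↔ y` off `C̃^b(x)`. So `E(x, b, y; A)` is `{b occupied}` intersected with
an event not involving `b`, which produces the factor `p`. That event is split according to the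
value `S` of `C̃^b(x)`, almost surely a finite set since `χ(p) < ∞` below `p_c`. For `v ∉ S` the
event `{C̃^b(x) = S} ∩ E'(x, u; A)` depends only on bonds touching `S`, whereas `{v ↔ y off S}`
depends only on the remaining bonds; the two are independent because `ℙ_p` is a product measure.
Summing over `S` gives the integral.

That `ℙ_p`, built from the bits `bit p n` of one uniform variable, is the product of Bernoulli
measures rests on the first bit and the rescaled remainder being independent, the remainder being
again uniform.
-/

section Bonds

variable {d : ℕ}

def farEnd (b : Bond d) : Vertex d := b.1 + basis b.2

def Spans (b : Bond d) (a c : Vertex d) : Prop :=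
  (b.1 = a ∧ farEnd b = c) ∨ (b.1 = c ∧ farEnd b = a)

/-- `B(S)` in the paper. -/
def incidentBonds (S : Set (Vertex d)) : Set (Bond d) := {b | b.1 ∈ S ∨ farEnd b ∈ S}

open scoped Classical in
noncomputable def restrictInside (ω : Config d) (S : Set (Vertex d)) : Config d :=
  fun b => decide (b.1 ∈ S ∧ farEnd b ∈ S) && ω b

lemma basis_injective : Function.Injective (basis (d := d)) := by
  intro i j h
  by_contra hij
  simpa [basis, Ne.symm hij] using congrFun h j

lemma basis_add_basis_ne_zero (i j : Fin d) : basis i + basis j ≠ (0 : Vertex d) := by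
  intro h
  have h' := congrFun h i
  simp only [Pi.add_apply, Pi.zero_apply, basis] at h'
  split_ifs at h' <;> omega

lemma Spans.eq {b b' : Bond d} {a c : Vertex d} (h : Spans b a c) (h' : Spans b' a c) :
    b = b' := by
  obtain ⟨b1, i⟩ := b
  obtain ⟨b1', j⟩ := b'
  simp only [Spans, farEnd] at h h'
  rcases h with ⟨rfl, rfl⟩ | ⟨rfl, rfl⟩ <;> rcases h' with ⟨rfl, h2⟩ | ⟨rfl, h2⟩
  · rw [basis_injective (add_left_cancel h2)]
  · exact absurd (by simpa [add_assoc] using h2) (basis_add_basis_ne_zero i j)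
  · exact absurd (by simpa [add_assoc] using h2) (basis_add_basis_ne_zero i j)
  · rw [basis_injective (add_left_cancel h2)]

lemma Spans.sameEdge {b : Bond d} {a c u v : Vertex d} (h : Spans b a c) (h' : Spans b u v) :
    SameEdge a c u v := by
  unfold Spans at h h'
  unfold SameEdge
  grind

lemma occ_iff_exists_spans {ω : Config d} {a c : Vertex d} :
    Occ ω a c ↔ ∃ b, Spans b a c ∧ ω b = true := by
  constructor
  · rintro (⟨i, h1, h2⟩ | ⟨i, h1, h2⟩)
    · exact ⟨(a, i), Or.inl ⟨rfl, h1.symm⟩, h2⟩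
    · exact ⟨(c, i), Or.inr ⟨rfl, h1.symm⟩, h2⟩
  · rintro ⟨⟨b, i⟩, ⟨rfl, rfl⟩ | ⟨rfl, rfl⟩, hb⟩
    · exact Or.inl ⟨i, rfl, hb⟩
    · exact Or.inr ⟨i, rfl, hb⟩

lemma occ_iff_of_spans {ω : Config d} {b : Bond d} {a c : Vertex d} (hb : Spans b a c) :
    Occ ω a c ↔ ω b = true :=
  occ_iff_exists_spans.trans ⟨fun ⟨_, hb', h⟩ => hb.eq hb' ▸ h, fun h => ⟨b, hb, h⟩⟩

lemma occ_congr {ω ω' : Config d} {a c : Vertex d} (h : ∀ b, Spans b a c → ω b = ω' b) :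
    Occ ω a c ↔ Occ ω' a c := by
  simp only [occ_iff_exists_spans]
  exact exists_congr fun b => ⟨fun ⟨hb, hω⟩ => ⟨hb, h b hb ▸ hω⟩,
    fun ⟨hb, hω⟩ => ⟨hb, (h b hb).symm ▸ hω⟩⟩

lemma occ_symm {ω : Config d} {a c : Vertex d} (h : Occ ω a c) : Occ ω c a :=
  h.symm

lemma Occ.mono {ω ω' : Config d} {a c : Vertex d} (hle : ω ≤ ω') (h : Occ ω a c) :
    Occ ω' a c := by
  obtain ⟨b, hb, hω⟩ := occ_iff_exists_spans.mp h
  exact occ_iff_exists_spans.mpr ⟨b, hb, Bool.le_iff_imp.mp (hle b) hω⟩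

lemma restrictInside_le (ω : Config d) (S : Set (Vertex d)) : restrictInside ω S ≤ ω :=
  fun _ => Bool.and_le_right _ _

lemma occ_restrictInside {ω : Config d} {S : Set (Vertex d)} {a c : Vertex d} :
    Occ (restrictInside ω S) a c ↔ Occ ω a c ∧ a ∈ S ∧ c ∈ S := by
  simp only [occ_iff_exists_spans, restrictInside, Bool.and_eq_true, decide_eq_true_eq]
  constructor
  · rintro ⟨b, hb, hS, hω⟩
    refine ⟨⟨b, hb, hω⟩, ?_⟩
    rcases hb with ⟨rfl, rfl⟩ | ⟨rfl, rfl⟩ <;> tauto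
  · rintro ⟨⟨b, hb, hω⟩, hS⟩
    refine ⟨b, hb, ?_, hω⟩
    rcases hb with ⟨rfl, rfl⟩ | ⟨rfl, rfl⟩ <;> tauto

lemma exists_eq_basis_of_norm1 {w : Vertex d} (h : norm1 w = 1) :
    ∃ i, w = basis i ∨ w = -basis i := by
  classical
  have h' : ∑ j, |w j| = 1 := h
  obtain ⟨i, hi⟩ : ∃ i, w i ≠ 0 := by
    by_contra! hc
    simp [hc] at h'
  have hsplit := Finset.add_sum_erase Finset.univ (fun j => |w j|) (Finset.mem_univ i)
  have hrest : ∑ k ∈ Finset.univ.erase i, |w k| = 0 := by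
    have : 0 ≤ ∑ k ∈ Finset.univ.erase i, |w k| := Finset.sum_nonneg fun k _ => abs_nonneg _
    have := Int.one_le_abs hi
    omega
  have hzero : ∀ j ≠ i, w j = 0 := fun j hj => abs_eq_zero.mp <|
    (Finset.sum_eq_zero_iff_of_nonneg fun k _ => abs_nonneg (w k)).mp hrest j
      (Finset.mem_erase.mpr ⟨hj, Finset.mem_univ j⟩)
  have hwi : |w i| = 1 := by omega
  refine ⟨i, ?_⟩
  rcases abs_eq (zero_le_one' ℤ) |>.mp hwi with h1 | h1
  · left; ext j; by_cases hj : j = i <;> simp_all [basis]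
  · right; ext j; by_cases hj : j = i <;> simp_all [basis]

lemma exists_spans_of_norm1 {u v : Vertex d} (huv : norm1 (u - v) = 1) :
    ∃ b : Bond d, Spans b u v := by
  obtain ⟨i, h | h⟩ := exists_eq_basis_of_norm1 huv
  · exact ⟨(v, i), Or.inr ⟨rfl, show v + basis i = u by linear_combination -h⟩⟩
  · exact ⟨(u, i), Or.inl ⟨rfl, show u + basis i = v by linear_combination h⟩⟩

end Bonds

section Cluster

variable {d : ℕ} {ω ω' : Config d} {u v x y w a c : Vertex d} {A S : Set (Vertex d)}

lemma conn_symm (h : Conn ω a c) : Conn ω c a :=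
  haveI : Std.Symm (Occ ω) := ⟨fun _ _ => occ_symm⟩
  symm_of (Relation.ReflTransGen (Occ ω)) h

lemma Conn.mono (hle : ω ≤ ω') (h : Conn ω a c) : Conn ω' a c :=
  Relation.ReflTransGen.mono (fun _ _ => Occ.mono hle) _ _ h

lemma ConnThrough.conn (h : ConnThrough ω A a c) : Conn ω a c := by
  rcases h with ⟨rfl, -⟩ | ⟨-, h, -⟩
  exacts [.refl, h]

lemma ConnOff.conn (h : ConnOff ω S a c) : Conn ω a c :=
  Relation.ReflTransGen.mono (fun _ _ h => h.1) _ _ h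

lemma ConnOff.notMem (h : ConnOff ω S a c) (ha : a ∉ S) : c ∉ S := by
  induction h with
  | refl => exact ha
  | tail _ hstep _ => exact hstep.2.2

lemma mem_tildeC_self : x ∈ tildeC ω u v x := .refl

lemma mem_tildeC_of_occ (hw : w ∈ tildeC ω u v x) (h : Occ ω w a)
    (hne : ¬ SameEdge w a u v) : a ∈ tildeC ω u v x :=
  Relation.ReflTransGen.tail hw ⟨h, hne⟩

lemma conn_of_mem_tildeC (hw : w ∈ tildeC ω u v x) : Conn ω x w :=
  Relation.ReflTransGen.mono (fun _ _ h => h.1) _ _ hw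

lemma tildeC_subset_cluster : tildeC ω u v x ⊆ {z | Conn ω x z} :=
  fun _ => conn_of_mem_tildeC

lemma mem_tildeC_or_occ_of_conn (h : Conn ω x w) : w ∈ tildeC ω u v x ∨ Occ ω u v := by
  induction h with
  | refl => exact Or.inl mem_tildeC_self
  | @tail b c _ hstep ih =>
    refine ih.elim (fun hb => ?_) Or.inr
    by_cases hse : SameEdge b c u v
    · rcases hse with ⟨rfl, rfl⟩ | ⟨rfl, rfl⟩
      exacts [Or.inr hstep, Or.inr (occ_symm hstep)]
    · exact Or.inl (mem_tildeC_of_occ hb hstep hse)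

lemma mem_tildeC_of_conn (hu : u ∈ tildeC ω u v x) (hv : v ∈ tildeC ω u v x)
    (hw : w ∈ tildeC ω u v x) (h : Conn ω w a) : a ∈ tildeC ω u v x := by
  induction h with
  | refl => exact hw
  | @tail b c _ hstep ih =>
    by_cases hse : SameEdge b c u v
    · rcases hse with ⟨-, rfl⟩ | ⟨-, rfl⟩
      exacts [hv, hu]
    · exact mem_tildeC_of_occ ih hstep hse

lemma mem_tildeC_restrictInside (hw : w ∈ tildeC ω u v x) :
    w ∈ tildeC (restrictInside ω (tildeC ω u v x)) u v x := by
  induction hw with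
  | refl => exact .refl
  | tail hp hstep ih =>
    exact ih.tail ⟨occ_restrictInside.mpr ⟨hstep.1, hp, hp.tail hstep⟩, hstep.2⟩

lemma conn_restrictInside_of_mem (ha : a ∈ tildeC ω u v x) (hc : c ∈ tildeC ω u v x) :
    Conn (restrictInside ω (tildeC ω u v x)) a c :=
  (conn_symm (conn_of_mem_tildeC (mem_tildeC_restrictInside ha))).trans
    (conn_of_mem_tildeC (mem_tildeC_restrictInside hc))

/-- When `u ∈ C̃^{uv}(x) ∌ v`, a path from `x` can only leave `C̃^{uv}(x)` through `u → v`
and re-enter through `v → u`, so every excursion outside can be cut out. -/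
lemma reflTransGen_restrictInside_tildeC (φ : Vertex d → Vertex d → Prop)
    (hu : u ∈ tildeC ω u v x) (hv : v ∉ tildeC ω u v x)
    (hw : Relation.ReflTransGen (fun a c => Occ ω a c ∧ φ a c) x w) :
    (w ∈ tildeC ω u v x → Relation.ReflTransGen
        (fun a c => Occ (restrictInside ω (tildeC ω u v x)) a c ∧ φ a c) x w) ∧
    (w ∉ tildeC ω u v x → Relation.ReflTransGen
        (fun a c => Occ (restrictInside ω (tildeC ω u v x)) a c ∧ φ a c) x u) := by
  induction hw with
  | refl => exact ⟨fun _ => .refl, fun hx => absurd mem_tildeC_self hx⟩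
  | @tail w' w _ hstep ih =>
    by_cases hw' : w' ∈ tildeC ω u v x <;> by_cases hw : w ∈ tildeC ω u v x
    · exact ⟨fun _ => (ih.1 hw').tail ⟨occ_restrictInside.mpr ⟨hstep.1, hw', hw⟩, hstep.2⟩,
        absurd hw⟩
    · refine ⟨(absurd · hw), fun _ => ?_⟩
      by_cases hse : SameEdge w' w u v
      · rcases hse with ⟨rfl, -⟩ | ⟨rfl, -⟩
        exacts [ih.1 hw', absurd hw' hv]
      · exact absurd (mem_tildeC_of_occ hw' hstep.1 hse) hw
    · refine ⟨fun _ => ?_, absurd hw⟩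
      by_cases hse : SameEdge w' w u v
      · rcases hse with ⟨rfl, -⟩ | ⟨-, rfl⟩
        exacts [absurd hu hw', ih.2 hw']
      · exact absurd (mem_tildeC_of_occ hw (occ_symm hstep.1)
          fun h => hse (h.elim (fun h => Or.inr h.symm) fun h => Or.inl h.symm)) hw'
    · exact ⟨(absurd · hw), fun _ => ih.2 hw'⟩

lemma connOff_of_conn (hu : u ∈ tildeC ω u v x) (hv : v ∉ tildeC ω u v x)
    (h : Conn ω v w) (hw : w ∉ tildeC ω u v x) : ConnOff ω (tildeC ω u v x) v w := by
  suffices ∀ z, Conn ω v z → z ∈ tildeC ω u v x ∨ ConnOff ω (tildeC ω u v x) v z from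
    (this w h).resolve_left hw
  intro z hz
  induction hz with
  | refl => exact Or.inr .refl
  | @tail b c _ hstep ih =>
    by_cases hc : c ∈ tildeC ω u v x
    · exact Or.inl hc
    rcases ih with hb | hb
    · by_cases hse : SameEdge b c u v
      · rcases hse with ⟨-, rfl⟩ | ⟨-, rfl⟩
        exacts [Or.inr .refl, absurd hu hc]
      · exact absurd (mem_tildeC_of_occ hb hstep hse) hc
    · exact Or.inr (hb.tail ⟨hstep, hb.notMem hv, hc⟩)

/-- If `u ∉ C̃^{uv}(x)`, then `(u, v)` is an occupied pivotal bond for `x ↔ u`. -/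
lemma Eprime.mem_tildeC (hE : Eprime ω x u A) : u ∈ tildeC ω u v x := by
  by_contra hu
  have hxu := hE.1.conn
  have hocc := (mem_tildeC_or_occ_of_conn (v := v) hxu).resolve_left hu
  exact hE.2 ⟨u, v, hocc, ⟨hxu, .single (occ_symm hocc), hu⟩, hE.1⟩

end Cluster

section Events

variable {d : ℕ} {ω ω' : Config d} {u v x y a c : Vertex d} {A S : Set (Vertex d)}
  {β : Bond d}

/-- `E'(x, b̲; A) ∩ {b̄ ∉ C̃^b(x)} ∩ {b̄ ↔ y off C̃^b(x)}` for `b = (u, v)`. -/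
def cutEvent (x u v y : Vertex d) (A : Set (Vertex d)) : Set (Config d) :=
  {ω | Eprime ω x u A ∧ v ∉ tildeC ω u v x ∧ ConnOff ω (tildeC ω u v x) v y}

lemma eev_iff (hβ : Spans β u v) : Eev ω x u v y A ↔ ω β = true ∧ ω ∈ cutEvent x u v y A := by
  constructor
  · rintro ⟨hE, hocc, -, hvy, hy⟩
    have hu : u ∈ tildeC ω u v x := hE.mem_tildeC
    have hv : v ∉ tildeC ω u v x := fun hv => hy (mem_tildeC_of_conn hu hv hv hvy)
    exact ⟨(occ_iff_of_spans hβ).mp hocc, hE, hv, connOff_of_conn hu hv hvy hy⟩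
  · rintro ⟨hβω, hE, hv, hvy⟩
    exact ⟨hE, (occ_iff_of_spans hβ).mpr hβω, hE.1.conn, hvy.conn, hvy.notMem hv⟩

lemma connThrough_restrictInside_iff (hu : u ∈ tildeC ω u v x) (hv : v ∉ tildeC ω u v x)
    (ha : a ∈ tildeC ω u v x) :
    ConnThrough ω A x a ↔ ConnThrough (restrictInside ω (tildeC ω u v x)) A x a := by
  refine or_congr Iff.rfl (and_congr Iff.rfl
    (and_congr ?_ (not_congr ⟨fun h => ?_, fun h => ?_⟩)))
  · exact iff_of_true (conn_of_mem_tildeC ha) (conn_restrictInside_of_mem mem_tildeC_self ha)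
  · exact (reflTransGen_restrictInside_tildeC (fun a c => a ∉ A ∧ c ∉ A) hu hv h).1 ha
  · exact Relation.ReflTransGen.mono
      (fun _ _ h => ⟨Occ.mono (restrictInside_le _ _) h.1, h.2⟩) _ _ h

/-- A bond that is pivotal for `x ↔ u` lies inside `C̃^{uv}(x)`, since otherwise a path from
`x` to `u` inside `C̃^{uv}(x)` would avoid it. -/
lemma mem_tildeC_of_pivotal (hu : u ∈ tildeC ω u v x) (hpiv : u ∉ tildeC ω a c x) :
    a ∈ tildeC ω u v x ∧ c ∈ tildeC ω u v x := by
  by_contra hac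
  refine hpiv (Relation.ReflTransGen.mono (fun a' c' h => ?_) _ _
    (mem_tildeC_restrictInside hu))
  obtain ⟨hocc, ha', hc'⟩ := occ_restrictInside.mp h.1
  refine ⟨hocc, fun hse => hac ?_⟩
  rcases hse with ⟨rfl, rfl⟩ | ⟨rfl, rfl⟩
  exacts [⟨ha', hc'⟩, ⟨hc', ha'⟩]

lemma mem_tildeC_iff_restrictInside (hu : u ∈ tildeC ω u v x) (hv : v ∉ tildeC ω u v x) :
    u ∈ tildeC ω a c x ↔ u ∈ tildeC (restrictInside ω (tildeC ω u v x)) a c x :=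
  ⟨fun h => (reflTransGen_restrictInside_tildeC (fun a' c' => ¬ SameEdge a' c' a c) hu hv h).1
      hu,
    Relation.ReflTransGen.mono (fun _ _ h => ⟨Occ.mono (restrictInside_le _ _) h.1, h.2⟩) _ _⟩

lemma eprime_iff_restrictInside (hS : tildeC ω u v x = S) (hu : u ∈ S) (hv : v ∉ S) :
    Eprime ω x u A ↔ Eprime (restrictInside ω S) x u A := by
  subst hS
  refine and_congr (connThrough_restrictInside_iff hu hv hu) (not_congr ⟨?_, ?_⟩)
  · rintro ⟨a, c, hocc, hpiv, hth⟩
    obtain ⟨ha, hc⟩ := mem_tildeC_of_pivotal hu hpiv.2.2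
    exact ⟨a, c, occ_restrictInside.mpr ⟨hocc, ha, hc⟩,
      ⟨conn_restrictInside_of_mem mem_tildeC_self ha, conn_restrictInside_of_mem hc hu,
        fun h => hpiv.2.2 ((mem_tildeC_iff_restrictInside hu hv).mpr h)⟩,
      (connThrough_restrictInside_iff hu hv ha).mp hth⟩
  · rintro ⟨a, c, hocc, hpiv, hth⟩
    obtain ⟨hocc, ha, hc⟩ := occ_restrictInside.mp hocc
    exact ⟨a, c, hocc,
      ⟨conn_of_mem_tildeC ha, (conn_symm (conn_of_mem_tildeC hc)).trans (conn_of_mem_tildeC hu),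
        fun h => hpiv.2.2 ((mem_tildeC_iff_restrictInside hu hv).mp h)⟩,
      (connThrough_restrictInside_iff hu hv ha).mpr hth⟩

end Events

section Locality

variable {d : ℕ} {ω ω' : Config d} {u v x y a c : Vertex d} {A S : Set (Vertex d)}
  {β : Bond d}

lemma Spans.mem_incidentBonds_iff {b : Bond d} (hb : Spans b a c) :
    b ∈ incidentBonds S ↔ a ∈ S ∨ c ∈ S := by
  rcases hb with ⟨rfl, rfl⟩ | ⟨rfl, rfl⟩ <;> simp [incidentBonds, or_comm]

lemma tildeC_congr (hβ : Spans β u v) (h : ∀ b ≠ β, ω b = ω' b) :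
    tildeC ω u v x = tildeC ω' u v x := by
  have : OccAvoid ω u v = OccAvoid ω' u v := by
    ext a c
    exact and_congr_left fun hne =>
      occ_congr fun b hb => h b fun hbβ => hne (hb.sameEdge (hbβ ▸ hβ))
  simp only [tildeC, this]

lemma connOff_congr (h : ∀ b ∉ incidentBonds S, ω b = ω' b) :
    ConnOff ω S a c ↔ ConnOff ω' S a c := by
  have : OccOff ω S = OccOff ω' S := by
    ext a c
    exact and_congr_left fun hac => occ_congr fun b hb =>
      h b (by rw [hb.mem_incidentBonds_iff]; tauto)
  simp only [ConnOff, this]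

lemma restrictInside_congr (h : ∀ b, b.1 ∈ S → farEnd b ∈ S → ω b = ω' b) :
    restrictInside ω S = restrictInside ω' S := by
  ext b
  by_cases hb : b.1 ∈ S ∧ farEnd b ∈ S
  · simp [restrictInside, hb, h b hb.1 hb.2]
  · simp [restrictInside, hb]

lemma tildeC_eq_of_eqOn_incidentBonds (hS : tildeC ω u v x = S)
    (h : ∀ b ∈ incidentBonds S, ω b = ω' b) : tildeC ω' u v x = S := by
  have hocc {a c} (ha : a ∈ S) : Occ ω a c ↔ Occ ω' a c :=
    occ_congr fun b hb => h b (hb.mem_incidentBonds_iff.mpr (Or.inl ha))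
  subst hS
  refine Set.Subset.antisymm (fun w hw => ?_) (fun w hw => ?_)
  · induction hw with
    | refl => exact mem_tildeC_self
    | tail _ hstep ih => exact mem_tildeC_of_occ ih ((hocc ih).mpr hstep.1) hstep.2
  · refine Relation.ReflTransGen.mono (fun a c hac => ?_) _ _
      (mem_tildeC_restrictInside hw)
    obtain ⟨hocc', ha, -⟩ := occ_restrictInside.mp hac.1
    exact ⟨(hocc ha).mp hocc', hac.2⟩

lemma dependsOn_of_imp {ι : Type*} {α : ι → Type*} {P : (Π i, α i) → Prop} {s : Set ι}
    (h : ∀ f g, (∀ i ∈ s, f i = g i) → P f → P g) : DependsOn P s :=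
  fun f g hfg => propext ⟨h f g hfg, h g f fun i hi => (hfg i hi).symm⟩

lemma dependsOn_cutEvent (hβ : Spans β u v) : DependsOn (· ∈ cutEvent x u v y A) {β}ᶜ := by
  refine dependsOn_of_imp fun ω ω' hag ⟨hE, hv, hvy⟩ => ?_
  have hag' : ∀ b ≠ β, ω b = ω' b := fun b hb => hag b hb
  have hu : u ∈ tildeC ω u v x := hE.mem_tildeC
  have hC := (tildeC_congr (x := x) hβ hag').symm
  refine ⟨?_, hC ▸ hv, ?_⟩
  · rw [eprime_iff_restrictInside hC hu hv, ← restrictInside_congr,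
      ← eprime_iff_restrictInside rfl hu hv]
    · exact hE
    · rintro b hb1 hb2
      refine hag' b fun hbβ => ?_
      rcases hbβ ▸ hβ with ⟨h1, h2⟩ | ⟨h1, h2⟩
      exacts [hv (h2 ▸ hb2), hv (h1 ▸ hb1)]
  · rw [hC, ← connOff_congr]
    · exact hvy
    · exact fun b hb => hag' b fun hbβ =>
        hb (hbβ ▸ hβ.mem_incidentBonds_iff.mpr (Or.inl hu))

lemma dependsOn_clusterEvent (hv : v ∉ S) :
    DependsOn (fun ω => tildeC ω u v x = S ∧ Eprime ω x u A) (incidentBonds S) := by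
  refine dependsOn_of_imp fun ω ω' hag ⟨hS, hE⟩ => ?_
  have hu : u ∈ S := hS ▸ hE.mem_tildeC
  have hS' := tildeC_eq_of_eqOn_incidentBonds hS hag
  refine ⟨hS', ?_⟩
  rw [eprime_iff_restrictInside hS' hu hv,
    ← restrictInside_congr fun b hb _ => hag b (Or.inl hb)]
  exact (eprime_iff_restrictInside hS hu hv).mp hE

lemma dependsOn_connOff : DependsOn (fun ω => ConnOff ω S a c) (incidentBonds S)ᶜ :=
  fun _ _ hag => propext (connOff_congr hag)

end Locality

section Measurability

lemma measurable_isChain {Ω α : Type*} [MeasurableSpace Ω] {R : Ω → α → α → Prop}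
    (hR : ∀ a c, Measurable fun ω => R ω a c) (a : α) (l : List α) :
    Measurable fun ω => List.IsChain (R ω) (a :: l) := by
  induction l generalizing a with
  | nil => simp
  | cons c l ih =>
    simp only [List.isChain_cons_cons]
    exact (hR a c).and (ih c)

lemma measurable_reflTransGen {Ω α : Type*} [MeasurableSpace Ω] [Countable α]
    {R : Ω → α → α → Prop} (hR : ∀ a c, Measurable fun ω => R ω a c) (a c : α) :
    Measurable fun ω => Relation.ReflTransGen (R ω) a c := by
  have : (fun ω => Relation.ReflTransGen (R ω) a c) = fun ω => ∃ l : List α,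
      List.IsChain (R ω) (a :: l) ∧ (a :: l).getLast (List.cons_ne_nil _ _) = c :=
    funext fun ω => propext ⟨List.exists_isChain_cons_of_relationReflTransGen,
      fun ⟨l, h1, h2⟩ => List.relationReflTransGen_of_exists_isChain_cons l h1 h2⟩
  rw [this]
  exact .exists fun l => (measurable_isChain hR a l).and measurable_const

variable {d : ℕ} {u v x y a c : Vertex d} {A S : Set (Vertex d)}

lemma measurable_occ : Measurable fun ω : Config d => Occ ω a c := by
  simp only [occ_iff_exists_spans]
  exact .exists fun b => measurable_const.and (measurableSet_setOfPred.mp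
    (measurableSet_eq_fun (measurable_pi_apply b) measurable_const))

lemma measurable_conn : Measurable fun ω : Config d => Conn ω a c :=
  measurable_reflTransGen (fun _ _ => measurable_occ) a c

lemma measurable_connOff : Measurable fun ω : Config d => ConnOff ω S a c :=
  measurable_reflTransGen (fun _ _ => measurable_occ.and measurable_const) a c

lemma measurable_mem_tildeC : Measurable fun ω : Config d => a ∈ tildeC ω u v x :=
  measurable_reflTransGen (fun _ _ => measurable_occ.and measurable_const) x a

lemma measurableSet_tildeC_eq (S : Set (Vertex d)) :
    MeasurableSet {ω : Config d | tildeC ω u v x = S} := by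
  simp only [Set.ext_iff]
  exact measurableSet_setOfPred.mpr
    (.forall fun _ => measurable_mem_tildeC.iff measurable_const)

lemma measurable_connThrough : Measurable fun ω : Config d => ConnThrough ω A a c :=
  measurable_const.or (measurable_const.and (measurable_conn.and measurable_connOff.not))

lemma measurable_eprime : Measurable fun ω : Config d => Eprime ω x u A :=
  measurable_connThrough.and (Measurable.exists fun _ => .exists fun _ => measurable_occ.and
    ((measurable_conn.and (measurable_conn.and measurable_mem_tildeC.not)).and
      measurable_connThrough)).not

lemma measurableSet_cutEvent : MeasurableSet (cutEvent x u v y A) :=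
  measurableSet_setOfPred.mpr <| measurable_eprime.and <| measurable_mem_tildeC.not.and <|
    measurable_reflTransGen (fun _ _ => measurable_occ.and
      (measurable_mem_tildeC.not.and measurable_mem_tildeC.not)) v y

end Measurability

section ProductMeasure

variable {ι : Type*} {X : ι → Type*} [∀ i, MeasurableSpace (X i)] (μ : ∀ i, Measure (X i))
  [∀ i, IsProbabilityMeasure (μ i)]

lemma measurable_piecewise_prod (S : Set ι) [DecidablePred (· ∈ S)] :
    Measurable fun ω : (Π i, X i) × (Π i, X i) => S.piecewise ω.1 ω.2 := by
  refine measurable_pi_lambda _ fun i => ?_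
  by_cases hi : i ∈ S
  · simp only [Set.piecewise, hi, if_true]
    fun_prop
  · simp only [Set.piecewise, hi, if_false]
    fun_prop

lemma infinitePi_map_piecewise (S : Set ι) [DecidablePred (· ∈ S)] :
    Measure.map (fun ω : (Π i, X i) × (Π i, X i) => S.piecewise ω.1 ω.2)
      ((Measure.infinitePi μ).prod (Measure.infinitePi μ)) = Measure.infinitePi μ := by
  refine Measure.eq_infinitePi _ fun s t ht => ?_
  have : (fun ω : (Π i, X i) × (Π i, X i) => S.piecewise ω.1 ω.2) ⁻¹' (s : Set ι).pi t =
      ((s.filter (· ∈ S) : Finset ι) : Set ι).pi t ×ˢ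
        ((s.filter (· ∉ S) : Finset ι) : Set ι).pi t := by
    ext ω
    simp only [Set.mem_preimage, Set.mem_pi, Finset.mem_coe, Set.mem_prod, Finset.mem_filter,
      Set.piecewise]
    grind
  rw [Measure.map_apply (measurable_piecewise_prod S) (.pi s.countable_toSet fun i _ => ht i),
    this, Measure.prod_prod, Measure.infinitePi_pi _ fun i _ => ht i,
    Measure.infinitePi_pi _ fun i _ => ht i, Finset.prod_filter_mul_prod_filter_not]

lemma infinitePi_inter_eq_mul_of_dependsOn {S : Set ι} {W H : Set (Π i, X i)}
    (hW : MeasurableSet W) (hH : MeasurableSet H) (hWS : DependsOn (· ∈ W) S)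
    (hHS : DependsOn (· ∈ H) Sᶜ) :
    Measure.infinitePi μ (W ∩ H) = Measure.infinitePi μ W * Measure.infinitePi μ H := by
  classical
  have : (fun ω : (Π i, X i) × (Π i, X i) => S.piecewise ω.1 ω.2) ⁻¹' (W ∩ H) = W ×ˢ H := by
    ext ω
    have h1 := hWS (x := S.piecewise ω.1 ω.2) (y := ω.1) fun i hi =>
      Set.piecewise_eq_of_mem _ _ _ hi
    have h2 := hHS (x := S.piecewise ω.1 ω.2) (y := ω.2) fun i hi =>
      Set.piecewise_eq_of_notMem _ _ _ hi
    simp only [Set.mem_preimage, Set.mem_inter_iff, Set.mem_prod, h1, h2]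
  conv_lhs => rw [← infinitePi_map_piecewise μ S]
  rw [Measure.map_apply (measurable_piecewise_prod S) (hW.inter hH), this, Measure.prod_prod]

end ProductMeasure

section Bits

local notation "𝕌" => volume.restrict (Set.Ico (0 : ℝ) 1)

variable {d : ℕ} {p q : ℝ}

instance : IsProbabilityMeasure 𝕌 := ⟨by simp⟩

noncomputable def bernoulliBool (p : ℝ) : Measure Bool := Measure.map (bit p 0) 𝕌

noncomputable def rescale (p u : ℝ) : ℝ := if u < p then u / p else (u - p) / (1 - p)

lemma bit_succ (p : ℝ) (n : ℕ) (u : ℝ) : bit p (n + 1) u = bit p n (rescale p u) := rfl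

@[fun_prop]
lemma measurable_bit (p : ℝ) (n : ℕ) : Measurable (bit p n) := by
  induction n with
  | zero => exact Measurable.ite measurableSet_Iio measurable_const measurable_const
  | succ n ih =>
    refine ih.comp (Measurable.ite measurableSet_Iio ?_ ?_) <;> fun_prop

instance (p : ℝ) : IsProbabilityMeasure (bernoulliBool p) :=
  Measure.isProbabilityMeasure_map (measurable_bit p 0).aemeasurable

lemma volume_Ico_inter_preimage_affine {a b : ℝ} (hab : a ≤ b) (G : Set ℝ) :
    volume (Set.Ico a b ∩ (fun u => (u - a) / (b - a)) ⁻¹' G) =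
      ENNReal.ofReal (b - a) * volume (G ∩ Set.Ico 0 1) := by
  rcases hab.eq_or_lt with rfl | hab
  · simp
  have hba : 0 < b - a := sub_pos.mpr hab
  have : Set.Ico a b ∩ (fun u => (u - a) / (b - a)) ⁻¹' G =
      (fun u => u + -a) ⁻¹' ((fun u => (b - a)⁻¹ * u) ⁻¹' (G ∩ Set.Ico 0 1)) := by
    ext u
    simp only [Set.mem_inter_iff, Set.mem_Ico, Set.mem_preimage, ← sub_eq_add_neg,
      inv_mul_eq_div, le_div_iff₀ hba, div_lt_one hba]
    constructor <;> rintro ⟨h1, h2⟩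
    exacts [⟨h2, by linarith, by linarith⟩, ⟨⟨by linarith, by linarith⟩, h1⟩]
  rw [this, measure_preimage_add_right, Real.volume_preimage_mul_left (inv_ne_zero hba.ne'),
    inv_inv, abs_of_pos hba]

lemma preimage_bit_zero_true_inter_Ico (hp1 : p ≤ 1) :
    bit p 0 ⁻¹' {true} ∩ Set.Ico 0 1 = Set.Ico 0 p := by
  ext u
  simp only [bit, Set.mem_inter_iff, Set.mem_preimage, Set.mem_singleton_iff, Set.mem_Ico,
    ite_eq_left_iff, reduceCtorEq, imp_false, not_not]
  exact ⟨fun ⟨h, h0, _⟩ => ⟨h0, h⟩, fun ⟨h0, h⟩ => ⟨h, h0, h.trans_le hp1⟩⟩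

lemma preimage_bit_zero_false_inter_Ico (hp0 : 0 ≤ p) :
    bit p 0 ⁻¹' {false} ∩ Set.Ico 0 1 = Set.Ico p 1 := by
  ext u
  simp only [bit, Set.mem_inter_iff, Set.mem_preimage, Set.mem_singleton_iff, Set.mem_Ico,
    ite_eq_right_iff, reduceCtorEq, imp_false, not_lt]
  exact ⟨fun ⟨h, _, h1⟩ => ⟨h, h1⟩, fun ⟨h, h1⟩ => ⟨h, hp0.trans h, h1⟩⟩

lemma bernoulliBool_true (hp1 : p ≤ 1) : bernoulliBool p {true} = ENNReal.ofReal p := by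
  rw [bernoulliBool, Measure.map_apply (measurable_bit p 0) (measurableSet_singleton true),
    Measure.restrict_apply' measurableSet_Ico, preimage_bit_zero_true_inter_Ico hp1,
    Real.volume_Ico, sub_zero]

/-- On `{bit p 0 = t} ∩ [0, 1)`, which is `[0, p)` or `[p, 1)`, the map `rescale p` is the
increasing affine bijection onto `[0, 1)`: the first bit and the rescaled remainder are
independent, and the remainder is again uniform. -/
lemma restrict_Ico_preimage_bit_zero_singleton_inter (hp0 : 0 ≤ p) (hp1 : p ≤ 1)
    (t : Bool) (G : Set ℝ) :
    𝕌 (bit p 0 ⁻¹' {t} ∩ rescale p ⁻¹' G) = 𝕌 (bit p 0 ⁻¹' {t}) * 𝕌 G := by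
  simp only [Measure.restrict_apply' measurableSet_Ico]
  rw [Set.inter_right_comm]
  cases t
  · have hEq : Set.EqOn (rescale p) (fun u => (u - p) / (1 - p)) (Set.Ico p 1) :=
      fun u hu => if_neg (not_lt.mpr hu.1)
    rw [preimage_bit_zero_false_inter_Ico hp0, hEq.inter_preimage_eq,
      volume_Ico_inter_preimage_affine hp1, Real.volume_Ico]
  · have hEq : Set.EqOn (rescale p) (fun u => (u - 0) / (p - 0)) (Set.Ico 0 p) :=
      fun u hu => by simp [rescale, hu.2]
    rw [preimage_bit_zero_true_inter_Ico hp1, hEq.inter_preimage_eq,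
      volume_Ico_inter_preimage_affine hp0, Real.volume_Ico]

lemma restrict_Ico_preimage_bit_zero_inter (hp0 : 0 ≤ p) (hp1 : p ≤ 1) (T : Set Bool)
    (G : Set ℝ) : 𝕌 (bit p 0 ⁻¹' T ∩ rescale p ⁻¹' G) = bernoulliBool p T * 𝕌 G := by
  have hlaw : Measure.map (bit p 0) ((𝕌).restrict (rescale p ⁻¹' G)) = 𝕌 G • bernoulliBool p := by
    refine Measure.ext_iff_singleton.mpr fun t => ?_
    rw [Measure.smul_apply, bernoulliBool, Measure.map_apply (measurable_bit p 0) (.of_discrete),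
      Measure.map_apply (measurable_bit p 0) (.of_discrete),
      Measure.restrict_apply (measurable_bit p 0 (.of_discrete)),
      restrict_Ico_preimage_bit_zero_singleton_inter hp0 hp1, smul_eq_mul, mul_comm]
  have := congrArg (· T) hlaw
  rwa [Measure.map_apply (measurable_bit p 0) (.of_discrete), Measure.restrict_apply
    (measurable_bit p 0 (.of_discrete)), Measure.smul_apply, smul_eq_mul, mul_comm] at this

lemma restrict_Ico_bits_prefix (hp0 : 0 ≤ p) (hp1 : p ≤ 1) (n : ℕ) (t : ℕ → Set Bool) :
    𝕌 {u | ∀ i < n, bit p i u ∈ t i} = ∏ i ∈ Finset.range n, bernoulliBool p (t i) := by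
  induction n generalizing t with
  | zero => simp
  | succ n ih =>
    have : {u | ∀ i < n + 1, bit p i u ∈ t i} =
        bit p 0 ⁻¹' t 0 ∩ rescale p ⁻¹' {u | ∀ i < n, bit p i u ∈ t (i + 1)} := by
      ext u
      simp only [Nat.forall_lt_succ_left, bit_succ]
      rfl
    rw [this, restrict_Ico_preimage_bit_zero_inter hp0 hp1, ih, Finset.prod_range_succ',
      mul_comm]

lemma map_bits_eq_infinitePi (hp0 : 0 ≤ p) (hp1 : p ≤ 1) :
    Measure.map (fun u n => bit p n u) 𝕌 = Measure.infinitePi fun _ : ℕ => bernoulliBool p := by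
  classical
  refine Measure.eq_infinitePi _ fun s t _ => ?_
  obtain ⟨n, hn⟩ := Finset.exists_nat_subset_range s
  have : (fun u n => bit p n u) ⁻¹' (s : Set ℕ).pi t =
      {u | ∀ i < n, bit p i u ∈ if i ∈ s then t i else Set.univ} := by
    ext u
    simp only [Set.mem_preimage, Set.mem_pi, Finset.mem_coe, Set.mem_ofPred_eq]
    refine ⟨fun h i _ => ?_, fun h i hi => by simpa [hi] using h i (Finset.mem_range.mp (hn hi))⟩
    split_ifs with hi
    exacts [h i hi, trivial]
  rw [Measure.map_apply (by fun_prop) (.pi s.countable_toSet fun _ _ => .of_discrete), this,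
    restrict_Ico_bits_prefix hp0 hp1]
  simp only [apply_ite (bernoulliBool p), measure_univ]
  rw [Finset.prod_ite_mem, Finset.inter_eq_right.mpr hn]

instance : IsProbabilityMeasure (percMeasure d p) :=
  Measure.isProbabilityMeasure_map (by fun_prop)

lemma percMeasure_eq_infinitePi (hp0 : 0 ≤ p) (hp1 : p ≤ 1) :
    percMeasure d p = Measure.infinitePi fun _ : Bond d => bernoulliBool p := by
  have : (fun u (b : Bond d) => bit p (Encodable.encode b) u) =
      (fun s b => s (Encodable.encode b)) ∘ fun u n => bit p n u := rfl
  rw [percMeasure, this, ← Measure.map_map (by fun_prop) (by fun_prop),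
    map_bits_eq_infinitePi hp0 hp1,
    Measure.map_infinitePi_infinitePi_of_inj Encodable.encode_injective]

/-- The standard monotone coupling of the measures `ℙ_p`. -/
lemma percMeasure_eq_map_infinitePi_uniform (hp0 : 0 ≤ p) (hp1 : p ≤ 1) :
    percMeasure d p =
      Measure.map (fun U b => bit p 0 (U b)) (Measure.infinitePi fun _ : Bond d => 𝕌) := by
  rw [percMeasure_eq_infinitePi hp0 hp1, Measure.infinitePi_map_pi _ fun _ => measurable_bit p 0]
  rfl

lemma percMeasure_mono (hp0 : 0 ≤ p) (hpq : p ≤ q) (hq1 : q ≤ 1) {V : Set (Config d)}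
    (hV : MeasurableSet V) (hVup : IsUpperSet V) : percMeasure d p V ≤ percMeasure d q V := by
  rw [percMeasure_eq_map_infinitePi_uniform hp0 (hpq.trans hq1),
    percMeasure_eq_map_infinitePi_uniform (hp0.trans hpq) hq1,
    Measure.map_apply (by fun_prop) hV, Measure.map_apply (by fun_prop) hV]
  refine measure_mono fun U hU => hVup (fun b => Bool.le_iff_imp.mpr fun h => ?_) hU
  simp only [bit, ite_eq_left_iff, reduceCtorEq, imp_false, not_not] at h ⊢
  exact h.trans_le hpq

end Bits

section PercolationMeasure

variable {d : ℕ} {p : ℝ}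

lemma percMeasure_occupied (hp0 : 0 ≤ p) (hp1 : p ≤ 1) (b : Bond d) :
    percMeasure d p {ω | ω b = true} = ENNReal.ofReal p := by
  rw [percMeasure_eq_infinitePi hp0 hp1]
  have := (measurePreserving_eval_infinitePi (fun _ : Bond d => bernoulliBool p) b).measure_preimage
    (s := {true}) (measurableSet_singleton true).nullMeasurableSet
  simp only [Set.preimage, Function.eval, Set.mem_singleton_iff] at this
  rw [this, bernoulliBool_true hp1]

lemma percMeasure_inter_eq_mul_of_dependsOn (hp0 : 0 ≤ p) (hp1 : p ≤ 1) {S : Set (Bond d)}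
    {W H : Set (Config d)} (hW : MeasurableSet W) (hH : MeasurableSet H)
    (hWS : DependsOn (· ∈ W) S) (hHS : DependsOn (· ∈ H) Sᶜ) :
    percMeasure d p (W ∩ H) = percMeasure d p W * percMeasure d p H := by
  rw [percMeasure_eq_infinitePi hp0 hp1]
  exact infinitePi_inter_eq_mul_of_dependsOn _ hW hH hWS hHS

lemma percMeasure_preimage_comp_equiv (hp0 : 0 ≤ p) (hp1 : p ≤ 1) (e : Bond d ≃ Bond d)
    {V : Set (Config d)} (hV : MeasurableSet V) :
    percMeasure d p ((· ∘ e) ⁻¹' V) = percMeasure d p V := by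
  rw [← Measure.map_apply (by fun_prop) hV, percMeasure_eq_infinitePi hp0 hp1]
  exact congrArg (fun μ : Measure (Config d) => μ V)
    (Measure.map_infinitePi_infinitePi_of_inj e.injective)

end PercolationMeasure

section Subcritical

variable {d : ℕ} {p q : ℝ}

def bondShift (t : Vertex d) : Bond d ≃ Bond d := (Equiv.addRight t).prodCongr (Equiv.refl _)

lemma occ_comp_bondShift {ω : Config d} {t a c : Vertex d} :
    Occ (ω ∘ bondShift t) a c ↔ Occ ω (a + t) (c + t) := by
  simp only [Occ, bondShift, Function.comp_apply, Equiv.prodCongr_apply, Equiv.coe_addRight,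
    Equiv.coe_refl, Prod.map_apply, id_eq, add_right_comm _ t, add_left_inj]

lemma conn_comp_bondShift {ω : Config d} {t a c : Vertex d} :
    Conn (ω ∘ bondShift t) a c ↔ Conn ω (a + t) (c + t) := by
  constructor
  · exact Relation.ReflTransGen.lift (r := Occ (ω ∘ bondShift t)) (p := Occ ω) (· + t)
      (fun _ _ => occ_comp_bondShift.mp) _ _
  · intro h
    simpa [Function.onFun, Conn] using Relation.ReflTransGen.lift (r := Occ ω)
      (p := Occ (ω ∘ bondShift t)) (· - t)
      (fun _ _ h => occ_comp_bondShift.mpr (by simpa using h)) _ _ h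

lemma percMeasure_conn (hp0 : 0 ≤ p) (hp1 : p ≤ 1) (x z : Vertex d) :
    percMeasure d p {ω | Conn ω x z} = tauE d p (z - x) := by
  have : {ω : Config d | Conn ω x z} = (· ∘ bondShift x) ⁻¹' {ω | Conn ω 0 (z - x)} := by
    ext ω
    simp [conn_comp_bondShift]
  rw [this, percMeasure_preimage_comp_equiv hp0 hp1 _ (measurableSet_setOfPred.mpr measurable_conn),
    tauE]

lemma tauE_mono (hp0 : 0 ≤ p) (hpq : p ≤ q) (hq1 : q ≤ 1) (z : Vertex d) :
    tauE d p z ≤ tauE d q z :=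
  percMeasure_mono hp0 hpq hq1 (measurableSet_setOfPred.mpr measurable_conn)
    fun _ _ hle h => Conn.mono hle h

lemma pc_le_one (d : ℕ) : pc d ≤ 1 :=
  Real.sSup_le (fun _ hp => hp.1.2) zero_le_one

lemma chi_lt_top_of_lt_pc (hp0 : 0 ≤ p) (hp : p < pc d) : chi d p < ⊤ := by
  have hne : {q : ℝ | q ∈ Set.Icc (0 : ℝ) 1 ∧ chi d q < ⊤}.Nonempty := by
    by_contra h
    rw [Set.not_nonempty_iff_eq_empty] at h
    rw [pc, h, Real.sSup_empty] at hp
    linarith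
  obtain ⟨q, ⟨⟨-, hq1⟩, hq⟩, hpq⟩ := exists_lt_of_lt_csSup hne hp
  exact (ENNReal.tsum_le_tsum fun z => tauE_mono hp0 hpq.le hq1 z).trans_lt hq

/-- Finite susceptibility bounds the expected cluster size, so clusters are a.s. finite. -/
lemma ae_finite_cluster (hp0 : 0 ≤ p) (hp1 : p ≤ 1) (hχ : chi d p < ⊤) (x : Vertex d) :
    ∀ᵐ ω ∂percMeasure d p, {z | Conn ω x z}.Finite := by
  have hmeas (z : Vertex d) : MeasurableSet {ω : Config d | Conn ω x z} :=
    measurableSet_setOfPred.mpr measurable_conn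
  have hN : ∫⁻ ω, ∑' z, {ω | Conn ω x z}.indicator 1 ω ∂percMeasure d p = chi d p := by
    rw [lintegral_tsum fun z => (measurable_one.indicator (hmeas z)).aemeasurable]
    simp_rw [lintegral_indicator_one (hmeas _), percMeasure_conn hp0 hp1]
    exact (Equiv.subRight x).tsum_eq (tauE d p)
  filter_upwards [ae_lt_top (Measurable.tsum fun z =>
    measurable_one.indicator (hmeas z)) (hN ▸ hχ.ne)] with ω hω
  refine (ENNReal.finite_const_le_of_tsum_ne_top hω.ne one_ne_zero).subset fun z hz => ?_
  simp [Set.indicator_of_mem (show ω ∈ {ω | Conn ω x z} from hz)]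

end Subcritical

section FiniteRandomSet

variable {Ω α : Type*} [MeasurableSpace Ω] {μ : Measure Ω} {C : Ω → Set α}

lemma ae_eq_tsum_indicator_of_ae_finite (hfin : ∀ᵐ ω ∂μ, (C ω).Finite)
    (G : Set α → Ω → ℝ≥0∞) :
    (fun ω => G (C ω) ω) =ᵐ[μ] fun ω => ∑' S : Finset α, {ω | C ω = S}.indicator (G S) ω := by
  filter_upwards [hfin] with ω hω
  have hmem : ω ∈ {ω' | C ω' = hω.toFinset} := hω.coe_toFinset.symm
  rw [tsum_eq_single hω.toFinset fun S hS => Set.indicator_of_notMem (fun h => hS ?_) _,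
    Set.indicator_of_mem hmem, hω.coe_toFinset]
  exact Finset.coe_injective (h.symm.trans hmem)

variable [Countable α] {G : Set α → Ω → ℝ≥0∞}

lemma aemeasurable_of_ae_finite (hfin : ∀ᵐ ω ∂μ, (C ω).Finite)
    (hC : ∀ S : Finset α, MeasurableSet {ω | C ω = S}) (hG : ∀ S : Finset α, Measurable (G S)) :
    AEMeasurable (fun ω => G (C ω) ω) μ :=
  (Measurable.tsum fun S => (hG S).indicator (hC S)).aemeasurable.congr
    (ae_eq_tsum_indicator_of_ae_finite hfin G).symm

lemma lintegral_eq_tsum_of_ae_finite (hfin : ∀ᵐ ω ∂μ, (C ω).Finite)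
    (hC : ∀ S : Finset α, MeasurableSet {ω | C ω = S}) (hG : ∀ S : Finset α, Measurable (G S)) :
    ∫⁻ ω, G (C ω) ω ∂μ = ∑' S : Finset α, ∫⁻ ω in {ω | C ω = S}, G S ω ∂μ := by
  rw [lintegral_congr_ae (ae_eq_tsum_indicator_of_ae_finite hfin G),
    lintegral_tsum fun S => ((hG S).indicator (hC S)).aemeasurable]
  exact tsum_congr fun S => lintegral_indicator (hC S) _


lemma integral_indicator_toReal {K : Set Ω} {f : Ω → ℝ≥0∞}
    (hf : AEMeasurable (K.indicator f) μ) (hfin : ∀ ω, f ω ≠ ⊤) :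
    ∫ ω, K.indicator (fun ω => (f ω).toReal) ω ∂μ = (∫⁻ ω, K.indicator f ω ∂μ).toReal := by
  rw [← integral_toReal hf (ae_of_all _ fun ω => ?_)]
  · exact congrArg _ (Set.indicator_comp_of_zero ENNReal.toReal_zero)
  · by_cases hω : ω ∈ K <;> simp [hω, (hfin ω).lt_top]

end FiniteRandomSet

section Cutting

variable {d : ℕ} {p : ℝ} {x y u v : Vertex d} {A : Set (Vertex d)} {β : Bond d}

lemma measure_eev_eq (hp0 : 0 ≤ p) (hp1 : p ≤ 1) (hβ : Spans β u v) :
    percMeasure d p {ω | Eev ω x u v y A} =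
      ENNReal.ofReal p * percMeasure d p (cutEvent x u v y A) := by
  have : {ω | Eev ω x u v y A} = {ω | ω β = true} ∩ cutEvent x u v y A :=
    Set.ext fun _ => eev_iff hβ
  rw [this, percMeasure_inter_eq_mul_of_dependsOn hp0 hp1 (S := {β})
    (measurableSet_eq_fun (measurable_pi_apply β) measurable_const)
    measurableSet_cutEvent
    (fun ω ω' h => by simp [h β rfl]) (dependsOn_cutEvent hβ), percMeasure_occupied hp0 hp1]

/-- Given `C̃^{uv}(x) = S`, the connection `v ↔ y` off `S` is independent of everything that
determined `C̃^{uv}(x)`. -/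
lemma setLIntegral_cutEvent_eq (hp0 : 0 ≤ p) (hp1 : p ≤ 1) (S : Set (Vertex d)) :
    ∫⁻ ω in {ω | tildeC ω u v x = S},
        {ω | Eprime ω x u A ∧ v ∉ S ∧ ConnOff ω S v y}.indicator 1 ω ∂percMeasure d p =
      ∫⁻ ω in {ω | tildeC ω u v x = S}, {ω | Eprime ω x u A ∧ v ∉ S}.indicator
        (fun _ => percMeasure d p {ω₁ | ConnOff ω₁ S v y}) ω ∂percMeasure d p := by
  by_cases hv : v ∈ S
  · simp [hv]
  have hC := measurableSet_tildeC_eq (u := u) (v := v) (x := x) S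
  have hE := measurableSet_setOfPred.mpr (measurable_eprime (x := x) (u := u) (A := A))
  have hH := measurableSet_setOfPred.mpr (measurable_connOff (S := S) (a := v) (c := y))
  simp only [hv, not_false_eq_true, true_and, and_true]
  rw [lintegral_indicator_one (s := {ω | Eprime ω x u A ∧ ConnOff ω S v y}) (hE.inter hH),
    lintegral_indicator_const hE, Measure.restrict_apply' hC, Measure.restrict_apply' hC,
    show {ω | Eprime ω x u A ∧ ConnOff ω S v y} ∩ {ω | tildeC ω u v x = S} =
      ({ω | tildeC ω u v x = S} ∩ {ω | Eprime ω x u A}) ∩ {ω | ConnOff ω S v y} by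
        ext; simp only [Set.mem_inter_iff, Set.mem_ofPred_eq]; tauto,
    percMeasure_inter_eq_mul_of_dependsOn hp0 hp1 (hC.inter hE) hH
      (dependsOn_clusterEvent hv) dependsOn_connOff, Set.inter_comm, mul_comm]


lemma measure_cutEvent_eq_lintegral (hp0 : 0 ≤ p) (hp1 : p ≤ 1)
    (hfin : ∀ᵐ ω ∂percMeasure d p, (tildeC ω u v x).Finite) :
    percMeasure d p (cutEvent x u v y A) =
      ∫⁻ ω, {ω' | Eprime ω' x u A ∧ v ∉ tildeC ω' u v x}.indicator
        (fun ω' => percMeasure d p {ω₁ | ConnOff ω₁ (tildeC ω' u v x) v y}) ω ∂percMeasure d p := by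
  have hC (S : Finset (Vertex d)) := measurableSet_tildeC_eq (u := u) (v := v) (x := x) (S : Set _)
  have hE := measurable_eprime (x := x) (u := u) (A := A)
  calc _ = ∫⁻ ω, {ω' | Eprime ω' x u A ∧ v ∉ tildeC ω u v x ∧
          ConnOff ω' (tildeC ω u v x) v y}.indicator 1 ω ∂percMeasure d p :=
        (lintegral_indicator_one measurableSet_cutEvent).symm
    _ = ∑' S : Finset (Vertex d), ∫⁻ ω in {ω | tildeC ω u v x = S},
        {ω | Eprime ω x u A ∧ v ∉ (S : Set _) ∧ ConnOff ω S v y}.indicator 1 ω ∂percMeasure d p :=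
        lintegral_eq_tsum_of_ae_finite hfin hC
          (G := fun S => {ω | Eprime ω x u A ∧ v ∉ S ∧ ConnOff ω S v y}.indicator 1)
          fun S => measurable_one.indicator
            (measurableSet_setOfPred.mpr (hE.and (measurable_const.and measurable_connOff)))
    _ = _ := (tsum_congr fun S : Finset (Vertex d) =>
        setLIntegral_cutEvent_eq hp0 hp1 (S : Set (Vertex d))).trans
        (lintegral_eq_tsum_of_ae_finite hfin hC
          (G := fun S => {ω | Eprime ω x u A ∧ v ∉ S}.indicator
            fun _ => percMeasure d p {ω₁ | ConnOff ω₁ S v y})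
          fun S => measurable_const.indicator
            (measurableSet_setOfPred.mpr (hE.and measurable_const))).symm


lemma aemeasurable_cutIntegrand (hfin : ∀ᵐ ω ∂percMeasure d p, (tildeC ω u v x).Finite) :
    AEMeasurable ({ω' | Eprime ω' x u A ∧ v ∉ tildeC ω' u v x}.indicator
      fun ω' => percMeasure d p {ω₁ | ConnOff ω₁ (tildeC ω' u v x) v y}) (percMeasure d p) :=
  aemeasurable_of_ae_finite hfin (fun S => measurableSet_tildeC_eq (u := u) (v := v) (x := x) S)
    (G := fun S => {ω | Eprime ω x u A ∧ v ∉ S}.indicator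
      fun _ => percMeasure d p {ω₁ | ConnOff ω₁ S v y})
    fun _ => measurable_const.indicator
      (measurableSet_setOfPred.mpr (measurable_eprime.and measurable_const))

end Cutting

theorem cutting_lemma_general (d : ℕ) (p : ℝ) (hp0 : 0 ≤ p) (hp : p < pc d)
    (x y : Vertex d) (A : Set (Vertex d)) (u v : Vertex d)
    (huv : norm1 (u - v) = 1) :
    (percMeasure d p {ω | Eev ω x u v y A}).toReal =
      p * ∫ ω₀,
        Set.indicator {ω' : Config d | Eprime ω' x u A ∧ v ∉ tildeC ω' u v x}
          (fun ω' => (percMeasure d p {ω₁ | ConnOff ω₁ (tildeC ω' u v x) v y}).toReal)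
          ω₀ ∂(percMeasure d p) := by
  have hp1 : p ≤ 1 := hp.le.trans (pc_le_one d)
  obtain ⟨β, hβ⟩ := exists_spans_of_norm1 huv
  have hfin : ∀ᵐ ω ∂percMeasure d p, (tildeC ω u v x).Finite :=
    (ae_finite_cluster hp0 hp1 (chi_lt_top_of_lt_pc hp0 hp) x).mono
      fun _ h => h.subset tildeC_subset_cluster
  rw [measure_eev_eq hp0 hp1 hβ, measure_cutEvent_eq_lintegral hp0 hp1 hfin,
    integral_indicator_toReal (aemeasurable_cutIntegrand hfin) fun _ => measure_ne_top _ _,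
    ENNReal.toReal_mul, ENNReal.toReal_ofReal hp0]

/-- **Cutting lemma** (Lemma 3.2): for a directed nearest-neighbour bond `b = (u, v)`,
`ℙ_p(E(x, b, y; A)) = p·𝔼₀[𝟙{E'(x, u; A)} 𝟙{v ∉ C̃^b(x)} ℙ₁(v ↔ y off C̃^b(x))]`, where
the inner probability is over a second, independent configuration, with the cluster
`C̃^b(x)` of the outer configuration treated as a fixed vertex set. -/
theorem cutting_lemma (d : ℕ) (hd : 2 ≤ d) (p : ℝ) (hp0 : 0 ≤ p) (hp : p < pc d)
    (x y : Vertex d) (A : Set (Vertex d)) (u v : Vertex d)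
    (huv : norm1 (u - v) = 1) :
    (percMeasure d p {ω | Eev ω x u v y A}).toReal =
      p * ∫ ω₀,
        Set.indicator {ω' : Config d | Eprime ω' x u A ∧ v ∉ tildeC ω' u v x}
          (fun ω' => (percMeasure d p {ω₁ | ConnOff ω₁ (tildeC ω' u v x) v y}).toReal)
          ω₀ ∂(percMeasure d p) :=
  cutting_lemma_general d p hp0 hp x y A u v huv

end NoBLE
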